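/- Let ρ > 0 and consider the symmetric case k = 1. If γ ∈ (ρ/(ρ+1), 1) then T_is^{k=1} < T_ps^{k=1} < T_fs^{k=1}, and if γ ∈ (0, ρ/(ρ+1)) then T_fs^{k=1} < T_ps^{k=1} < T_is^{k=1}, where T_is^{k=1}, T_ps^{k=1}, T_fs^{k=1} are the explicit rational functions of (ρ,γ) given in the context. -/
import Mathlib


/-- Throughput of the independent system in the symmetric case `k = 1`. -/
noncomputable def TisK1 (ρ : ℝ) : ℝ := 2*ρ/(ρ+1)

/-- Throughput of the full flexibility system in the symmetric case `k = 1`. -/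
noncomputable def TfsK1 (ρ γ : ℝ) : ℝ :=
  2*γ*ρ*(2*γ^2*ρ + γ^2 + 2*γ*ρ^2 + 4*γ*ρ + γ + 2*ρ^2) /
    (γ^3*(ρ+1)^2 + γ^2*(ρ^3 + 5*ρ^2 + 4*ρ + 1) + 2*γ*ρ^2*(ρ+1) + ρ^3)

/-- Throughput of the partial flexibility system in the symmetric case `k = 1`. -/
noncomputable def TpsK1 (ρ γ : ℝ) : ℝ :=
  2*ρ*(3*γ^2*ρ + 2*γ^2 + 3*γ*ρ^2 + 7*γ*ρ + 2*γ + ρ^2) /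
    (2*γ^2*(ρ+1)^2 + γ*(2*ρ^3 + 9*ρ^2 + 8*ρ + 2) + 2*ρ^2*(ρ+1))

private lemma aux (ρ γ : ℝ) (hρ : 0 < ρ) (hγ : 0 < γ) :
    (0 < γ^3*(ρ+1)^2 + γ^2*(ρ^3 + 5*ρ^2 + 4*ρ + 1) + 2*γ*ρ^2*(ρ+1) + ρ^3) ∧
    (0 < 2*γ^2*(ρ+1)^2 + γ*(2*ρ^3 + 9*ρ^2 + 8*ρ + 2) + 2*ρ^2*(ρ+1)) ∧
    (0 < ρ + 1) := by
  refine ⟨?_, ?_, by linarith⟩ <;> positivity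

/-- in the symmetric case `k = 1`, the ordering of the throughputs
switches at `γ = ρ/(ρ+1)`. -/
theorem stmt_6 (ρ : ℝ) (hρ : 0 < ρ) :
    (∀ γ : ℝ, γ ∈ Set.Ioo (ρ/(ρ+1)) 1 →
      TisK1 ρ < TpsK1 ρ γ ∧ TpsK1 ρ γ < TfsK1 ρ γ) ∧
    (∀ γ : ℝ, γ ∈ Set.Ioo 0 (ρ/(ρ+1)) →
      TfsK1 ρ γ < TpsK1 ρ γ ∧ TpsK1 ρ γ < TisK1 ρ) := by
  have hρ1 : (0:ℝ) < ρ + 1 := by linarith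
  constructor
  · rintro γ ⟨h1, h2⟩
    have hγ : 0 < γ := lt_trans (by positivity) h1
    obtain ⟨hDfs, hDps, _⟩ := aux ρ γ hρ hγ
    have hf : 0 < γ*(ρ+1) - ρ := by
      have := (div_lt_iff₀ hρ1).mp h1
      linarith
    have hq1 : 0 < 2*ρ^2*(γ+ρ+1) := by positivity
    have hq2 : 0 < 2*ρ^5 + γ*(4*ρ^5+12*ρ^4+4*ρ^3) + γ^2*(2*ρ^5+12*ρ^4+12*ρ^3+2*ρ^2)
        + γ^3*(4*ρ^4+10*ρ^3+4*ρ^2) + γ^4*(2*ρ^3+2*ρ^2) := by positivity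
    constructor
    · rw [TisK1, TpsK1, div_lt_div_iff₀ hρ1 hDps]
      nlinarith [mul_pos hf hq1]
    · rw [TpsK1, TfsK1, div_lt_div_iff₀ hDps hDfs]
      nlinarith [mul_pos hf hq2]
  · rintro γ ⟨h1, h2⟩
    have hγ : 0 < γ := h1
    obtain ⟨hDfs, hDps, _⟩ := aux ρ γ hρ hγ
    have hf : 0 < ρ - γ*(ρ+1) := by
      have := (lt_div_iff₀ hρ1).mp h2
      linarith
    have hq1 : 0 < 2*ρ^2*(γ+ρ+1) := by positivity
    have hq2 : 0 < 2*ρ^5 + γ*(4*ρ^5+12*ρ^4+4*ρ^3) + γ^2*(2*ρ^5+12*ρ^4+12*ρ^3+2*ρ^2)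
        + γ^3*(4*ρ^4+10*ρ^3+4*ρ^2) + γ^4*(2*ρ^3+2*ρ^2) := by positivity
    constructor
    · rw [TfsK1, TpsK1, div_lt_div_iff₀ hDfs hDps]
      nlinarith [mul_pos hf hq2]
    · rw [TpsK1, TisK1, div_lt_div_iff₀ hDps hρ1]
      nlinarith [mul_pos hf hq1]
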